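/- arXiv:2509.04428 — 4 statements merged into one kernel-verified Lean document; each statement's English description precedes it below -/
import Mathlib

section
/- Let F : ℂ^l → ℂ be real-differentiable, let σ_1, …, σ_l be real numbers, and suppose Re F(e^{iσ_1 θ/2} z_1, …, e^{iσ_l θ/2} z_l) = Re F(z) for all θ ∈ ℝ and z ∈ ℂ^l. Define f_k(z) = ∂F/∂z̄_k(z) + conj(∂F/∂z_k(z)). Then f_k(e^{iσ_1 θ/2} z_1, …, e^{iσ_l θ/2} z_l) = e^{iσ_k θ/2} f_k(z) for all θ ∈ ℝ, z ∈ ℂ^l, and each k. -/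
open Finset

/-- Wirtinger derivative ∂/∂z_m of F : ℂ^l → ℂ at z (real Fréchet derivative version). -/
noncomputable def wirt {l : ℕ} (F : (Fin l → ℂ) → ℂ) (m : Fin l) (z : Fin l → ℂ) : ℂ :=
  (1 / 2 : ℂ) * (fderiv ℝ F z (Pi.single m 1) - Complex.I * fderiv ℝ F z (Pi.single m Complex.I))

/-- Wirtinger derivative ∂/∂z̄_m of F : ℂ^l → ℂ at z. -/
noncomputable def wirtBar {l : ℕ} (F : (Fin l → ℂ) → ℂ) (m : Fin l) (z : Fin l → ℂ) : ℂ :=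
  (1 / 2 : ℂ) * (fderiv ℝ F z (Pi.single m 1) + Complex.I * fderiv ℝ F z (Pi.single m Complex.I))

/-- The nonlinearity associated to the potential F. -/
noncomputable def nonlin {l : ℕ} (F : (Fin l → ℂ) → ℂ) (k : Fin l) (z : Fin l → ℂ) : ℂ :=
  wirtBar F k z + starRingEnd ℂ (wirt F k z)

/-!
Only `Re F` enters `f_k`: `f_k(w) = D(Re F)(w)(e_k) + i D(Re F)(w)(i e_k)` is the complex gradient
of the real functional `c ↦ D(Re F)(w)(c e_k)`. Differentiating `Re F ∘ T = Re F`, with `T` the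
diagonal multiplication by `e^{iσθ/2}`, gives `D(Re F)(z) = D(Re F)(T z) ∘ T`; precomposing a real
functional on `ℂ` with multiplication by `u` multiplies its gradient by `conj u`, and
`|e^{iσ_k θ/2}| = 1`.
-/

open Complex ComplexConjugate

/-- The complex number `g` with `φ c = re (conj g * c)` for all `c`. -/
noncomputable def complexGradient (φ : ℂ →L[ℝ] ℝ) : ℂ := φ 1 + I * φ I

theorem complexGradient_comp_mul (φ : ℂ →L[ℝ] ℝ) (u : ℂ) :
    complexGradient (φ.comp (ContinuousLinearMap.mul ℝ ℂ u)) = conj u * complexGradient φ := by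
  have hφ : ∀ c : ℂ, φ c = c.re * φ 1 + c.im * φ I := fun c => by
    rw [show c = c.re • (1 : ℂ) + c.im • I by apply Complex.ext <;> simp, map_add, map_smul,
      map_smul]
    simp
  simp only [complexGradient, ContinuousLinearMap.comp_apply, ContinuousLinearMap.mul_apply',
    mul_one, hφ (u * I)]
  rw [hφ u]
  apply Complex.ext
  · simp
  · simp; ring

theorem nonlin_eq_complexGradient {l : ℕ} {F : (Fin l → ℂ) → ℂ} {w : Fin l → ℂ}
    (hF : DifferentiableAt ℝ F w) (k : Fin l) :
    nonlin F k w = complexGradient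
      ((fderiv ℝ (fun z => (F z).re) w).comp (ContinuousLinearMap.single ℝ (fun _ => ℂ) k)) := by
  have hre : fderiv ℝ (fun z => (F z).re) w = reCLM.comp (fderiv ℝ F w) :=
    (reCLM.hasFDerivAt.comp w hF.hasFDerivAt).fderiv
  rw [hre]
  apply Complex.ext <;> simp [nonlin, wirt, wirtBar, complexGradient] <;> ring

theorem fderiv_eq_comp_of_comp_eq {E F : Type*} [NormedAddCommGroup E] [NormedSpace ℝ E]
    [NormedAddCommGroup F] [NormedSpace ℝ F] {G : E → F} (T : E →L[ℝ] E) (hT : G ∘ T = G)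
    {z : E} (hG : DifferentiableAt ℝ G (T z)) :
    fderiv ℝ G z = (fderiv ℝ G (T z)).comp T := by
  have h := fderiv_comp z hG T.differentiableAt
  rwa [T.fderiv, hT] at h

theorem nonlin_eq_conj_mul_nonlin_mul {l : ℕ} {F : (Fin l → ℂ) → ℂ} (hF : Differentiable ℝ F)
    {e : Fin l → ℂ} (hinv : ∀ z, (F (e * z)).re = (F z).re) (z : Fin l → ℂ) (k : Fin l) :
    nonlin F k z = conj (e k) * nonlin F k (e * z) := by
  have hD := fderiv_eq_comp_of_comp_eq (G := fun z => (F z).re)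
    (ContinuousLinearMap.mul ℝ (Fin l → ℂ) e) (funext hinv) (z := z)
    (reCLM.differentiableAt.comp _ (hF _))
  rw [nonlin_eq_complexGradient (hF z), nonlin_eq_complexGradient (hF _), hD,
    ← complexGradient_comp_mul]
  congr 1
  ext c
  simp [← Pi.single_mul_right]

/-- Gauge invariance of the nonlinearities derived from a gauge invariant potential. -/
theorem stmt2 (l : ℕ) (F : (Fin l → ℂ) → ℂ) (hF : Differentiable ℝ F) (σ : Fin l → ℝ)
    (hgauge : ∀ (θ : ℝ) (z : Fin l → ℂ),
      (F (fun j => Complex.exp (Complex.I * (σ j) * θ / 2) * z j)).re = (F z).re)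
    (θ : ℝ) (z : Fin l → ℂ) (k : Fin l) :
    nonlin F k (fun j => Complex.exp (Complex.I * (σ j) * θ / 2) * z j) =
      Complex.exp (Complex.I * (σ k) * θ / 2) * nonlin F k z := by
  set e : Fin l → ℂ := fun j => exp (I * σ j * θ / 2)
  have hunit : e k * conj (e k) = 1 := by
    rw [← exp_conj, ← exp_add, ← exp_zero]
    congr 1
    simp only [map_div₀, map_mul, conj_I, conj_ofReal, map_ofNat]
    ring
  change nonlin F k (e * z) = e k * nonlin F k z
  rw [nonlin_eq_conj_mul_nonlin_mul hF (hgauge θ) z k, ← mul_assoc, hunit, one_mul]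
end

section
/- Let F : ℂ^l → ℂ be real-differentiable with f_k(z) = ∂F/∂z̄_k(z) + conj(∂F/∂z_k(z)), and suppose Re F(e^{iσ_1 θ/2} z_1, …, e^{iσ_l θ/2} z_l) = Re F(z) for all real θ and all z ∈ ℂ^l, where σ_k = α_k/γ_k with α_k, γ_k > 0. Then for all z ∈ ℂ^l, Im ∑_{k=1}^l (α_k/γ_k) f_k(z) · conj(z_k) = 0. -/
open Finset

/-!
Differentiating `θ ↦ Re F(e^{iσ₁θ/2} z₁, …, e^{iσₗθ/2} zₗ)` at `θ = 0` shows that the real part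
of `dF_z` vanishes on the generator `(iσ₁z₁, …, iσₗzₗ)` of the phase rotation. Expanding `dF_z`
in Wirtinger derivatives, `Re dF_z(i c e_k) = Im (f_k(z) c̄)`, so that real part is
exactly `Im ∑ σ_k f_k(z) z̄_k`.
-/

open Complex ComplexConjugate

lemma fderiv_apply_single_eq_wirt {l : ℕ} (F : (Fin l → ℂ) → ℂ) (z : Fin l → ℂ) (k : Fin l)
    (c : ℂ) : fderiv ℝ F z (Pi.single k c) = wirt F k z * c + wirtBar F k z * conj c := by
  have hsingle : (Pi.single k c : Fin l → ℂ) =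
      c.re • (Pi.single k 1 : Fin l → ℂ) + c.im • (Pi.single k I : Fin l → ℂ) := by
    rw [← Pi.single_smul, ← Pi.single_smul, ← Pi.single_add]
    simpa [mul_comm] using (re_add_im c).symm
  rw [hsingle, map_add, map_smul, map_smul]
  apply Complex.ext <;> simp [wirt, wirtBar, mul_re, mul_im] <;> ring

lemma im_nonlin_mul_conj_eq_re_fderiv {l : ℕ} (F : (Fin l → ℂ) → ℂ) (k : Fin l) (z : Fin l → ℂ)
    (c : ℂ) :
    (nonlin F k z * conj c).im = (fderiv ℝ F z (Pi.single k (I * c))).re := by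
  rw [fderiv_apply_single_eq_wirt]
  simp [nonlin, mul_re, mul_im]
  ring

lemma re_fderiv_eq_zero_of_re_const_along {E : Type*} [NormedAddCommGroup E] [NormedSpace ℝ E]
    {F : E → ℂ} {x v : E} {c : ℝ → E} (hF : DifferentiableAt ℝ F x) (hc : HasDerivAt c v 0)
    (hc0 : c 0 = x) (hconst : ∀ θ, (F (c θ)).re = (F x).re) : (fderiv ℝ F x v).re = 0 := by
  subst hc0
  have hderiv : HasDerivAt (fun θ => (F (c θ)).re) (fderiv ℝ F (c 0) v).re 0 :=
    reCLM.hasFDerivAt.comp_hasDerivAt 0 (hF.hasFDerivAt.comp_hasDerivAt 0 hc)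
  rw [funext hconst] at hderiv
  exact hderiv.unique (hasDerivAt_const 0 _)

lemma hasDerivAt_phaseRotation {ι : Type*} [Fintype ι] (σ z : ι → ℂ) :
    HasDerivAt (fun θ : ℝ => fun j => exp (I * σ j * θ / 2) * z j)
      ((2⁻¹ : ℝ) • fun j => I * σ j * z j) 0 := by
  refine hasDerivAt_pi.2 fun j => ?_
  have hexp : HasDerivAt (fun u : ℂ => exp (I * σ j * u / 2) * z j) (I * σ j / 2 * z j)
      ((0 : ℝ) : ℂ) := by
    simpa using ((((hasDerivAt_id (0 : ℂ)).const_mul (I * σ j)).div_const 2).cexp).mul_const (z j)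
  refine hexp.comp_ofReal.congr_deriv ?_
  simp only [Pi.smul_apply, real_smul, ofReal_inv, ofReal_ofNat]
  ring

lemma re_fderiv_phaseGenerator_eq_zero {ι : Type*} [Fintype ι] {F : (ι → ℂ) → ℂ} {z : ι → ℂ}
    (σ : ι → ℂ) (hF : DifferentiableAt ℝ F z)
    (hgauge : ∀ θ : ℝ, (F fun j => exp (I * σ j * θ / 2) * z j).re = (F z).re) :
    (fderiv ℝ F z fun j => I * σ j * z j).re = 0 := by
  have h := re_fderiv_eq_zero_of_re_const_along hF (hasDerivAt_phaseRotation σ z)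
    (by simp) hgauge
  rwa [map_smul, real_smul, re_ofReal_mul, mul_eq_zero, or_iff_right (by norm_num)] at h

theorem stmt3_general (l : ℕ) (F : (Fin l → ℂ) → ℂ) (hF : Differentiable ℝ F)
    (α γ : Fin l → ℝ)
    (hgauge : ∀ (θ : ℝ) (z : Fin l → ℂ),
      (F (fun j => Complex.exp (Complex.I * (α j / γ j) * θ / 2) * z j)).re = (F z).re)
    (z : Fin l → ℂ) :
    (∑ k, ((α k / γ k : ℝ) : ℂ) * nonlin F k z * starRingEnd ℂ (z k)).im = 0 := by
  set σ : Fin l → ℂ := fun j => (α j : ℂ) / γ j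
  calc (∑ k, ((α k / γ k : ℝ) : ℂ) * nonlin F k z * conj (z k)).im
      = ∑ k, (fderiv ℝ F z (Pi.single k (I * σ k * z k))).re := by
        rw [im_sum]
        refine sum_congr rfl fun k _ => ?_
        rw [mul_assoc I, ← im_nonlin_mul_conj_eq_re_fderiv]
        simp only [σ, map_mul, map_div₀, conj_ofReal, ofReal_div]
        ring_nf
    _ = (fderiv ℝ F z fun j => I * σ j * z j).re := by
        rw [← re_sum, ← map_sum, univ_sum_single]
    _ = 0 := re_fderiv_phaseGenerator_eq_zero σ (hF z) (hgauge · z)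

/-- The key algebraic identity underlying mass conservation:
    Im ∑ (α_k/γ_k) f_k(z) conj(z_k) = 0 for gauge invariant F with σ_k = α_k/γ_k. -/
theorem stmt3 (l : ℕ) (F : (Fin l → ℂ) → ℂ) (hF : Differentiable ℝ F)
    (α γ : Fin l → ℝ) (hα : ∀ k, 0 < α k) (hγ : ∀ k, 0 < γ k)
    (hgauge : ∀ (θ : ℝ) (z : Fin l → ℂ),
      (F (fun j => Complex.exp (Complex.I * (α j / γ j) * θ / 2) * z j)).re = (F z).re)
    (z : Fin l → ℂ) :
    (∑ k, ((α k / γ k : ℝ) : ℂ) * nonlin F k z * starRingEnd ℂ (z k)).im = 0 :=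
  stmt3_general l F hF α γ hgauge z
end

section
/- Let a ∈ ℝ, b > 0, q > 1 and set γ = (bq)^{−1/(q−1)}. Define f(r) = a − r + b r^q for r ≥ 0. Let I ⊂ ℝ be an interval containing 0 and G : I → [0,∞) continuous with f(G(t)) ≥ 0 for all t ∈ I. Assume a < (1−δ)(1 − 1/q)γ for some δ > 0 sufficiently small. Then: (i) if G(0) < γ there exists δ₁ = δ₁(δ) > 0 with G(t) < (1−δ₁)γ for all t ∈ I; (ii) if G(0) > γ there exists δ₂ = δ₂(δ) > 0 with G(t) > (1+δ₂)γ for all t ∈ I. -/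
/-!
Since `b q γ^q = γ`, the point `γ` is the critical point of `f r = a - r + b r^q` and
`f γ = a - (1 - 1/q) γ < 0`. By continuity `f < 0` on a whole interval `[(1-δ')γ, (1+δ')γ]`,
which `G` can therefore never enter; as `I` is connected, the intermediate value theorem keeps
`G` on the side of this gap where `G 0` lies.
-/

open Set Topology

section Gap

variable {X α : Type*} [TopologicalSpace X] [LinearOrder α] [TopologicalSpace α]
  [OrderClosedTopology α] {s : Set X} {G : X → α} {x₀ : X} {c d : α}

theorem IsPreconnected.forall_lt_of_forall_notMem_Icc (hs : IsPreconnected s)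
    (hG : ContinuousOn G s) (hx₀ : x₀ ∈ s) (hcd : c ≤ d) (hgap : ∀ x ∈ s, G x ∉ Icc c d)
    (h₀ : G x₀ < d) : ∀ x ∈ s, G x < c := by
  intro x hx
  by_contra! hcx
  have hdx : d < G x := lt_of_not_ge fun hxd => hgap x hx ⟨hcx, hxd⟩
  obtain ⟨y, hy, hyd⟩ := hs.intermediate_value hx₀ hx hG ⟨h₀.le, hdx.le⟩
  exact hgap y hy (by rw [hyd]; exact right_mem_Icc.2 hcd)

theorem IsPreconnected.forall_gt_of_forall_notMem_Icc (hs : IsPreconnected s)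
    (hG : ContinuousOn G s) (hx₀ : x₀ ∈ s) (hcd : c ≤ d) (hgap : ∀ x ∈ s, G x ∉ Icc c d)
    (h₀ : c < G x₀) : ∀ x ∈ s, d < G x :=
  hs.forall_lt_of_forall_notMem_Icc (α := αᵒᵈ) hG hx₀ hcd (fun x hx h => hgap x hx h.symm) h₀

end Gap

theorem exists_pos_Icc_mul_subset {U : Set ℝ} {γ : ℝ} (hγ : 0 < γ) (hU : U ∈ 𝓝 γ) :
    ∃ δ > 0, Icc ((1 - δ) * γ) ((1 + δ) * γ) ⊆ U := by
  obtain ⟨ε, hε, hball⟩ := Metric.nhds_basis_closedBall.mem_iff.1 hU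
  refine ⟨ε / γ, div_pos hε hγ, ?_⟩
  rwa [sub_mul, add_mul, one_mul, div_mul_cancel₀ ε hγ.ne', ← Real.closedBall_eq_Icc]

theorem Real.mul_rpow_rpow_neg_one_div_sub_one {c q : ℝ} (hc : 0 < c) (hq : q ≠ 1) :
    c * (c ^ (-1 / (q - 1))) ^ q = c ^ (-1 / (q - 1)) := by
  have hq' : q - 1 ≠ 0 := sub_ne_zero.2 hq
  have hexp : 1 + -1 / (q - 1) * q = -1 / (q - 1) := by field_simp; ring
  have hexp_ne : 1 + -1 / (q - 1) * q ≠ 0 := by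
    rw [hexp]
    exact div_ne_zero (by norm_num) hq'
  rw [← Real.rpow_mul hc.le, ← Real.rpow_one_add' hc.le hexp_ne, hexp]

theorem sub_add_mul_rpow_of_eq_rpow {a b q γ : ℝ} (hb : 0 < b) (hq : 1 < q)
    (hγ : γ = (b * q) ^ (-(1 : ℝ) / (q - 1))) :
    a - γ + b * γ ^ q = a - (1 - 1 / q) * γ := by
  have hcrit : b * q * γ ^ q = γ :=
    hγ ▸ Real.mul_rpow_rpow_neg_one_div_sub_one (mul_pos hb (by linarith)) hq.ne'
  have hq0 : q ≠ 0 := by positivity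
  field_simp
  linear_combination hcrit

theorem stmt6_general (a b q δ γ : ℝ) (hb : 0 < b) (hq : 1 < q) (hδ : 0 < δ)
    (hγ : γ = (b * q) ^ (-(1 : ℝ) / (q - 1)))
    (I : Set ℝ) (hI : Convex ℝ I) (h0I : (0 : ℝ) ∈ I)
    (G : ℝ → ℝ) (hGc : ContinuousOn G I)
    (hfG : ∀ t ∈ I, 0 ≤ a - G t + b * (G t) ^ q)
    (ha : a < (1 - δ) * (1 - 1 / q) * γ) :
    ((G 0 < γ) → ∃ δ₁ > 0, ∀ t ∈ I, G t < (1 - δ₁) * γ) ∧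
    ((G 0 > γ) → ∃ δ₂ > 0, ∀ t ∈ I, G t > (1 + δ₂) * γ) := by
  have hγ0 : 0 < γ := hγ ▸ Real.rpow_pos_of_pos (mul_pos hb (by linarith)) _
  have hfγ : a - γ + b * γ ^ q < 0 := by
    have hq' : 0 < 1 - 1 / q := by rw [sub_pos, div_lt_one (by linarith)]; exact hq
    rw [sub_add_mul_rpow_of_eq_rpow hb hq hγ]
    nlinarith [mul_pos hq' hγ0]
  have hf : ContinuousAt (fun r : ℝ => a - r + b * r ^ q) γ :=
    (continuousAt_const.sub continuousAt_id).add
      (continuousAt_const.mul (Real.continuousAt_rpow_const _ _ (Or.inl hγ0.ne')))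
  obtain ⟨δ', hδ', hneg⟩ :=
    exists_pos_Icc_mul_subset hγ0 (hf.preimage_mem_nhds (Iio_mem_nhds hfγ))
  have hgap : ∀ t ∈ I, G t ∉ Icc ((1 - δ') * γ) ((1 + δ') * γ) :=
    fun t ht hmem => (hneg hmem).not_ge (hfG t ht)
  have hle : (1 - δ') * γ ≤ (1 + δ') * γ := by nlinarith
  refine ⟨fun h0 => ⟨δ', hδ', ?_⟩, fun h0 => ⟨δ', hδ', ?_⟩⟩
  · exact hI.isPreconnected.forall_lt_of_forall_notMem_Icc hGc h0I hle hgap (by nlinarith)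
  · exact hI.isPreconnected.forall_gt_of_forall_notMem_Icc hGc h0I hle hgap (by nlinarith)

/-- Trapping lemma: if f(r) = a - r + b r^q with f(G(t)) ≥ 0 on an interval I ∋ 0 and
a < (1-δ)(1-1/q)γ with γ = (bq)^{-1/(q-1)}, then G stays uniformly on one side of γ. -/
theorem stmt6 (a b q δ γ : ℝ) (hb : 0 < b) (hq : 1 < q) (hδ : 0 < δ) (hδ1 : δ < 1)
    (hγ : γ = (b * q) ^ (-(1 : ℝ) / (q - 1)))
    (I : Set ℝ) (hI : Convex ℝ I) (h0I : (0 : ℝ) ∈ I)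
    (G : ℝ → ℝ) (hGc : ContinuousOn G I) (hGnn : ∀ t ∈ I, 0 ≤ G t)
    (hfG : ∀ t ∈ I, 0 ≤ a - G t + b * (G t) ^ q)
    (ha : a < (1 - δ) * (1 - 1 / q) * γ) :
    ((G 0 < γ) → ∃ δ₁ > 0, ∀ t ∈ I, G t < (1 - δ₁) * γ) ∧
    ((G 0 > γ) → ∃ δ₂ > 0, ∀ t ∈ I, G t > (1 + δ₂) * γ) :=
  stmt6_general a b q δ γ hb hq hδ hγ I hI h0I G hGc hfG ha
end

section
/- Let (ν_m) be a sequence of Borel probability measures on ℝ^d. Then there is a subsequence satisfying one of the following: (i) vanishing: for all R > 0, lim_m sup_{x∈ℝ^d} ν_m(B(x,R)) = 0; (ii) dichotomy: there exists λ ∈ (0,1) such that for all ε > 0 there exist R > 0 and a sequence (x_m) with, for every R' > R and all sufficiently large m, ν_m(B(x_m,R)) ≥ λ − ε and ν_m(ℝ^d \ B(x_m,R')) ≥ 1 − λ − ε; (iii) compactness: there exists a sequence (x_m) ⊂ ℝ^d such that for every ε > 0 there is R > 0 with ν_m(B(x_m,R)) ≥ 1 − ε for all m. -/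
/-!
Let `Q_m(R) = sup_x ν_m(B(x,R))` be the concentration function of `ν_m`. The functions `Q_m` take
values in `[0,1]`, so a diagonal subsequence makes `Q_m(q)` converge for every rational `q`, to
`g(q)` say, and we set `λ = sup_q g(q)`. If `λ = 0` the subsequence vanishes; for any `λ`, balls
almost realizing `Q_m(q)` for a `q` with `g(q)` close to `λ` carry mass at least about `λ`, while
every ball carries mass at most about `λ`, which is dichotomy when `0 < λ < 1`. If `λ = 1`, two
balls of mass `> 1/2` must meet, so a fixed family of centers `x_m` captures mass close to `1`
for large `m` at a fixed radius; the finitely many remaining measures are tight individually.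
-/

open MeasureTheory Filter Metric Set Topology

lemma exists_subseq_tendsto_of_mem_Icc {ι : Type*} [Countable ι] (f : ℕ → ι → ℝ) {a b : ℝ}
    (hf : ∀ m i, f m i ∈ Icc a b) :
    ∃ g : ι → ℝ, (∀ i, g i ∈ Icc a b) ∧ ∃ φ : ℕ → ℕ, StrictMono φ ∧
      ∀ i, Tendsto (fun m => f (φ m) i) atTop (𝓝 (g i)) := by
  obtain ⟨g, hg, φ, hφ, hconv⟩ :=
    (isCompact_univ_pi fun _ : ι => isCompact_Icc (a := a) (b := b)).tendsto_subseq
      (x := f) fun m i _ => hf m i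
  exact ⟨g, fun i => hg i (mem_univ i), φ, hφ, tendsto_pi_nhds.mp hconv⟩

namespace MeasureTheory

variable {α : Type*} [PseudoMetricSpace α] [MeasurableSpace α]

namespace Measure

noncomputable def concentration (μ : Measure α) (R : ℝ) : ℝ :=
  ⨆ x : α, μ.real (ball x R)

variable (μ : Measure α)

lemma concentration_nonneg (R : ℝ) : 0 ≤ μ.concentration R :=
  Real.iSup_nonneg fun _ => measureReal_nonneg

lemma concentration_le_one [IsProbabilityMeasure μ] (R : ℝ) : μ.concentration R ≤ 1 :=
  Real.iSup_le (fun _ => measureReal_le_one) zero_le_one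

variable [IsFiniteMeasure μ]

lemma bddAbove_range_measureReal_ball (R : ℝ) : BddAbove (range fun x => μ.real (ball x R)) :=
  ⟨μ.real univ, forall_mem_range.2 fun _ => measureReal_mono (subset_univ _)⟩

lemma measureReal_ball_le_concentration (x : α) (R : ℝ) : μ.real (ball x R) ≤ μ.concentration R :=
  le_ciSup (μ.bddAbove_range_measureReal_ball R) x

lemma monotone_concentration : Monotone μ.concentration := fun _ _ h =>
  ciSup_mono (μ.bddAbove_range_measureReal_ball _) fun _ => measureReal_mono (ball_subset_ball h)

lemma tendsto_measureReal_ball_atTop (c : α) :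
    Tendsto (fun R => μ.real (ball c R)) atTop (𝓝 (μ.real univ)) := by
  have hunion : (⋃ R : ℝ, ball c R) = univ :=
    eq_univ_of_forall fun x => mem_iUnion.2 ⟨dist x c + 1, mem_ball.2 (lt_add_one _)⟩
  have h := tendsto_measure_iUnion_atTop (μ := μ) fun _ _ h => ball_subset_ball (x := c) h
  rw [hunion] at h
  exact (ENNReal.tendsto_toReal (measure_ne_top μ univ)).comp h

lemma ball_subset_ball_of_half_lt_measureReal [OpensMeasurableSpace α] [IsProbabilityMeasure μ]
    {y z : α} {r s : ℝ} (hy : 1 / 2 < μ.real (ball y r)) (hz : 1 / 2 < μ.real (ball z s)) :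
    ball z s ⊆ ball y (s + (s + r)) := by
  obtain ⟨p, hpy, hpz⟩ := nonempty_inter_of_measureReal_lt_add (μ := μ) measurableSet_ball
    (subset_univ _) (subset_univ _)
    (by rw [probReal_univ]; linarith : μ.real univ < μ.real (ball y r) + μ.real (ball z s))
  refine ball_subset_ball' (add_le_add_right ?_ s)
  calc dist z y ≤ dist p z + dist p y := dist_triangle_left z y p
    _ ≤ s + r := add_le_add (mem_ball.1 hpz).le (mem_ball.1 hpy).le

end Measure

section Sequence

variable {μ : ℕ → Measure α} {g : ℚ → ℝ}

lemma exists_eventually_lt_measureReal_ball [Nonempty α]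
    (hconv : ∀ q : ℚ, Tendsto (fun m => (μ m).concentration q) atTop (𝓝 (g q)))
    {q : ℚ} {c : ℝ} (hc : c < g q) :
    ∃ x : ℕ → α, ∀ᶠ m in atTop, c < (μ m).real (ball (x m) q) := by
  obtain ⟨δ, hδ, hcδ⟩ : ∃ δ > 0, c + δ < g q := ⟨(g q - c) / 2, by linarith, by linarith⟩
  choose x hx using fun m => exists_lt_of_lt_ciSup (sub_lt_self ((μ m).concentration q) hδ)
  refine ⟨x, ((hconv q).eventually (eventually_gt_nhds hcδ)).mono fun m hm => ?_⟩
  linarith [hx m]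

variable [∀ m, IsProbabilityMeasure (μ m)]

lemma tendsto_concentration_of_forall_rat
    (hconv : ∀ q : ℚ, Tendsto (fun m => (μ m).concentration q) atTop (𝓝 0)) (R : ℝ) :
    Tendsto (fun m => (μ m).concentration R) atTop (𝓝 0) := by
  obtain ⟨q, hq⟩ := exists_rat_gt R
  exact squeeze_zero (fun m => (μ m).concentration_nonneg R)
    (fun m => (μ m).monotone_concentration hq.le) (hconv q)

lemma exists_pos_forall_le_measureReal_ball {ε : ℝ} (hε : 0 < ε) (x : ℕ → α)
    (h : ∃ R₀, ∀ᶠ m in atTop, 1 - ε ≤ (μ m).real (ball (x m) R₀)) :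
    ∃ R > 0, ∀ m, 1 - ε ≤ (μ m).real (ball (x m) R) := by
  obtain ⟨R₀, hR₀⟩ := h
  obtain ⟨M, hM⟩ := eventually_atTop.1 hR₀
  have htight : ∀ m ∈ Finset.range M, ∀ᶠ R in atTop, 1 - ε < (μ m).real (ball (x m) R) :=
    fun m _ => ((μ m).tendsto_measureReal_ball_atTop (x m)).eventually
      (eventually_gt_nhds (by rw [probReal_univ]; linarith))
  obtain ⟨R, hR, hR₀R, hRpos⟩ := ((eventually_all_finset _).2 htight).and
    ((eventually_ge_atTop R₀).and (eventually_gt_atTop 0)) |>.exists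
  refine ⟨R, hRpos, fun m => ?_⟩
  rcases lt_or_ge m M with hm | hm
  · exact (hR m (Finset.mem_range.2 hm)).le
  · exact (hM m hm).trans (measureReal_mono (ball_subset_ball hR₀R))

variable [OpensMeasurableSpace α]

lemma exists_ball_dichotomy_of_isLUB [Nonempty α]
    (hconv : ∀ q : ℚ, Tendsto (fun m => (μ m).concentration q) atTop (𝓝 (g q)))
    {lam : ℝ} (hlam : IsLUB (range g) lam) {ε : ℝ} (hε : 0 < ε) :
    ∃ R > 0, ∃ x : ℕ → α, ∀ R' > R, ∃ M : ℕ, ∀ m ≥ M,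
      lam - ε ≤ (μ m).real (ball (x m) R) ∧ 1 - lam - ε ≤ (μ m).real (ball (x m) R')ᶜ := by
  obtain ⟨_, ⟨q, rfl⟩, hq, -⟩ := hlam.exists_between (sub_lt_self lam hε)
  obtain ⟨x, hx⟩ := exists_eventually_lt_measureReal_ball hconv hq
  refine ⟨max q 1, lt_max_of_lt_right one_pos, x, fun R' hR' => ?_⟩
  obtain ⟨q', hq'⟩ := exists_rat_gt R'
  have hlt : ∀ᶠ m in atTop, (μ m).concentration q' < lam + ε :=
    (hconv q').eventually
      (eventually_lt_nhds ((hlam.1 ⟨q', rfl⟩).trans_lt (lt_add_of_pos_right _ hε)))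
  obtain ⟨M, hM⟩ := eventually_atTop.1 (hx.and hlt)
  refine ⟨M, fun m hm => ⟨?_, ?_⟩⟩
  · exact (hM m hm).1.le.trans (measureReal_mono (ball_subset_ball (le_max_left _ _)))
  · have hball : (μ m).real (ball (x m) R') ≤ (μ m).concentration q' :=
      (measureReal_mono (ball_subset_ball hq'.le)).trans
        ((μ m).measureReal_ball_le_concentration (x m) q')
    rw [probReal_compl_eq_one_sub measurableSet_ball]
    linarith [(hM m hm).2]

lemma exists_tight_centers_of_isLUB_one [Nonempty α]
    (hconv : ∀ q : ℚ, Tendsto (fun m => (μ m).concentration q) atTop (𝓝 (g q)))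
    (hlub : IsLUB (range g) 1) :
    ∃ x : ℕ → α, ∀ ε > 0, ∃ R > 0, ∀ m, 1 - ε ≤ (μ m).real (ball (x m) R) := by
  obtain ⟨_, ⟨q₀, rfl⟩, hq₀, -⟩ := hlub.exists_between (by norm_num : (1 / 2 : ℝ) < 1)
  obtain ⟨x, hx⟩ := exists_eventually_lt_measureReal_ball hconv hq₀
  refine ⟨x, fun ε hε => exists_pos_forall_le_measureReal_ball hε x ?_⟩
  set t := max (1 - ε) (1 / 2)
  obtain ⟨_, ⟨q₁, rfl⟩, hq₁, -⟩ := hlub.exists_between (max_lt (by linarith) (by norm_num) : t < 1)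
  obtain ⟨z, hz⟩ := exists_eventually_lt_measureReal_ball hconv hq₁
  refine ⟨q₁ + (q₁ + q₀), (hx.and hz).mono fun m ⟨hxm, hzm⟩ => ?_⟩
  have hsub := (μ m).ball_subset_ball_of_half_lt_measureReal hxm
    ((le_max_right _ _).trans_lt hzm)
  calc 1 - ε ≤ t := le_max_left _ _
    _ ≤ (μ m).real (ball (z m) q₁) := hzm.le
    _ ≤ (μ m).real (ball (x m) (q₁ + (q₁ + q₀))) := measureReal_mono hsub

end Sequence

end MeasureTheory

/-- Lions' first concentration-compactness lemma: any sequence of Borel probability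
measures on ℝ^d has a subsequence which either vanishes, dichotomizes, or is compact. -/
theorem stmt12 (d : ℕ) (ν : ℕ → Measure (EuclideanSpace ℝ (Fin d)))
    (hν : ∀ m, IsProbabilityMeasure (ν m)) :
    ∃ φ : ℕ → ℕ, StrictMono φ ∧
      ((∀ R > 0, Tendsto
          (fun m => ⨆ x : EuclideanSpace ℝ (Fin d), (ν (φ m) (Metric.ball x R)).toReal)
          atTop (nhds 0)) ∨
       (∃ lam : ℝ, 0 < lam ∧ lam < 1 ∧ ∀ ε > 0, ∃ R > 0,
          ∃ x : ℕ → EuclideanSpace ℝ (Fin d), ∀ R' > R, ∃ M : ℕ, ∀ m ≥ M,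
            (ν (φ m) (Metric.ball (x m) R)).toReal ≥ lam - ε ∧
            (ν (φ m) ((Metric.ball (x m) R')ᶜ)).toReal ≥ 1 - lam - ε) ∨
       (∃ x : ℕ → EuclideanSpace ℝ (Fin d), ∀ ε > 0, ∃ R > 0, ∀ m,
          (ν (φ m) (Metric.ball (x m) R)).toReal ≥ 1 - ε)) := by
  obtain ⟨g, hg, φ, hφ, hconv⟩ := exists_subseq_tendsto_of_mem_Icc
    (fun m (q : ℚ) => (ν m).concentration q)
    fun m q => ⟨(ν m).concentration_nonneg q, (ν m).concentration_le_one q⟩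
  refine ⟨φ, hφ, ?_⟩
  have hlub : IsLUB (range g) (⨆ q, g q) := isLUB_ciSup ⟨1, forall_mem_range.2 fun q => (hg q).2⟩
  set lam := ⨆ q, g q
  have hlam_le : lam ≤ 1 := hlub.2 (forall_mem_range.2 fun q => (hg q).2)
  rcases le_or_gt lam 0 with hlam0 | hlam0
  · have hg0 (q : ℚ) : g q = 0 := le_antisymm ((hlub.1 ⟨q, rfl⟩).trans hlam0) (hg q).1
    exact Or.inl fun R _ => tendsto_concentration_of_forall_rat
      (fun q => hg0 q ▸ hconv q) R
  rcases hlam_le.lt_or_eq with hlam1 | hlam1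
  · exact Or.inr (Or.inl
      ⟨lam, hlam0, hlam1, fun ε hε => exists_ball_dichotomy_of_isLUB hconv hlub hε⟩)
  · exact Or.inr (Or.inr (exists_tight_centers_of_isLUB_one hconv (hlam1 ▸ hlub)))
end
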